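/- Let q ≥ 2 be an integer. Define g : ℤ≥0 × ℝ≥0 → ℝ by g(r, t) = q^{-r/2} I_r(2√q t) − (q−1) ∑_{j=1}^∞ q^{-(r+2j)/2} I_{r+2j}(2√q t). Then for all t > 0, the function g satisfies the tree heat-equation relations: (q+1)·g(1,t) = ∂_t g(0,t), and for every r ≥ 1, q·g(r+1,t) + g(r−1,t) = ∂_t g(r,t). -/

import Mathlib

/-!
Write `φ_m(t) = q^{-m/2} I_m(2√q t)`, so that `g(r, ·) = φ_r - (q - 1) ∑_{j ≥ 1} φ_{r+2j}`.
Differentiating the power series of `I_m` termwise gives `I_0' = I_1` and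
`I_{m+1}' = (I_m + I_{m+2}) / 2`, that is `φ_0' = 2q φ_1` and `φ_{m+1}' = φ_m + q φ_{m+2}`.
The bound `|φ_m(t)| ≤ e^{q t²} |t|^m / m!` allows the series defining `g` to be differentiated
termwise as well. Regrouping then gives `g(r, ·)' = g(r - 1, ·) + q g(r + 1, ·)` for `r ≥ 1`; for
`r = 0` the term `φ_1` split off from `∑_j φ_{2j+1}` combines with `2q φ_1` into `(q + 1) g(1, ·)`.
-/

/-- Modified Bessel function of the first kind of integer order `r ≥ 0`,
defined by its power series. -/
noncomputable def besselI (r : ℕ) (t : ℝ) : ℝ :=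
  ∑' n : ℕ, (t / 2) ^ (2 * n + r) / (n.factorial * (n + r).factorial)

/-- The radial function `g(r,t) = q^{-r/2} I_r(2√q t) - (q-1) ∑_{j≥1} q^{-(r+2j)/2} I_{r+2j}(2√q t)`. -/
noncomputable def treeG (q : ℕ) (r : ℕ) (t : ℝ) : ℝ :=
  (q : ℝ) ^ (-(r : ℝ) / 2) * besselI r (2 * Real.sqrt q * t) -
    ((q : ℝ) - 1) *
      ∑' j : ℕ, (q : ℝ) ^ (-((r : ℝ) + 2 * ((j : ℝ) + 1)) / 2) *
        besselI (r + 2 * (j + 1)) (2 * Real.sqrt q * t)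

open Real Function

lemma hasDerivAt_tsum_of_abs_le {f f' : ℕ → ℝ → ℝ} {u : ℕ → ℝ} {x R : ℝ}
    (hf : ∀ n y, HasDerivAt (f n) (f' n y) y) (hu : Summable u)
    (hf' : ∀ n y, |y| < R → |f' n y| ≤ u n) (hxR : |x| < R) (hx : Summable (f · x)) :
    HasDerivAt (fun y => ∑' n, f n y) (∑' n, f' n x) x := by
  have hmem : x ∈ Metric.ball (0 : ℝ) R := by simpa using hxR
  exact hasDerivAt_tsum_of_isPreconnected hu Metric.isOpen_ball (convex_ball 0 R).isPreconnected
    (fun n y _ => hf n y) (fun n y hy => hf' n y (by simpa using hy)) hmem hx hmem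

lemma summable_pow_div_factorial_comp {k : ℕ → ℕ} (hk : Injective k) (x : ℝ) :
    Summable fun j => x ^ k j / (k j).factorial :=
  (Real.summable_pow_div_factorial x).comp_injective hk

noncomputable def besselTerm (m n : ℕ) (x : ℝ) : ℝ :=
  (x / 2) ^ (2 * n + m) / (n.factorial * (n + m).factorial)

lemma besselI_eq_tsum (m : ℕ) (x : ℝ) : besselI m x = ∑' n, besselTerm m n x := rfl

lemma abs_besselTerm_le (m n : ℕ) (x : ℝ) :
    |besselTerm m n x| ≤ (|x| / 2) ^ m / m.factorial * (((|x| / 2) ^ 2) ^ n / n.factorial) := by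
  have hfact : (m.factorial : ℝ) ≤ (n + m).factorial := by
    exact_mod_cast Nat.factorial_le (Nat.le_add_left m n)
  rw [besselTerm, abs_div, abs_of_pos (by positivity : (0 : ℝ) < n.factorial * (n + m).factorial),
    abs_pow, abs_div, abs_two]
  calc (|x| / 2) ^ (2 * n + m) / (n.factorial * (n + m).factorial)
      ≤ (|x| / 2) ^ (2 * n + m) / (n.factorial * m.factorial) := by gcongr
    _ = _ := by rw [pow_add, pow_mul]; ring

lemma summable_besselTerm (m : ℕ) (x : ℝ) : Summable fun n => besselTerm m n x := by
  refine .of_norm_bounded ((Real.summable_pow_div_factorial ((|x| / 2) ^ 2)).mul_left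
    ((|x| / 2) ^ m / m.factorial)) fun n => ?_
  exact abs_besselTerm_le m n x

lemma abs_besselI_le (m : ℕ) (x : ℝ) :
    |besselI m x| ≤ (|x| / 2) ^ m / m.factorial * exp ((|x| / 2) ^ 2) := by
  refine tsum_of_norm_bounded (f := fun n => besselTerm m n x) ?_ (abs_besselTerm_le m · x)
  rw [exp_eq_exp_ℝ]
  exact (NormedSpace.expSeries_div_hasSum_exp (𝔸 := ℝ) ((|x| / 2) ^ 2)).mul_left
    ((|x| / 2) ^ m / m.factorial)

noncomputable def besselTermDeriv (m n : ℕ) (x : ℝ) : ℝ :=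
  (2 * n + m) / 2 * (x / 2) ^ (2 * n + m - 1) / (n.factorial * (n + m).factorial)

lemma hasDerivAt_besselTerm (m n : ℕ) (x : ℝ) :
    HasDerivAt (besselTerm m n) (besselTermDeriv m n x) x := by
  have h : HasDerivAt (fun y : ℝ => (y / 2) ^ (2 * n + m) / (n.factorial * (n + m).factorial))
      _ x :=
    (((hasDerivAt_id' x).div_const 2).pow _).div_const _
  exact h.congr_deriv (by rw [besselTermDeriv]; push_cast; ring)

lemma abs_besselTermDeriv_le {m n : ℕ} {x R : ℝ} (hR : 1 ≤ R) (hx : |x| ≤ R) :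
    |besselTermDeriv m n x| ≤ (2 * R) ^ (2 * n + m) / n.factorial := by
  set k := 2 * n + m
  have hk : (2 * n + m : ℝ) ≤ 2 ^ k := by exact_mod_cast (Nat.lt_two_pow_self (n := k)).le
  have hxR : |x / 2| ^ (k - 1) ≤ R ^ k := by
    refine (pow_le_pow_left₀ (abs_nonneg _) ?_ _).trans (pow_le_pow_right₀ hR (Nat.sub_le k 1))
    rw [abs_div, abs_two]
    linarith [abs_nonneg x]
  have hfact : (1 : ℝ) ≤ (n + m).factorial := by exact_mod_cast (n + m).factorial_pos
  rw [besselTermDeriv, abs_div,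
    abs_of_pos (by positivity : (0 : ℝ) < n.factorial * (n + m).factorial), abs_mul, abs_div,
    abs_two, abs_of_nonneg (by positivity : (0 : ℝ) ≤ 2 * n + m), abs_pow]
  calc (2 * n + m) / 2 * |x / 2| ^ (k - 1) / (n.factorial * (n + m).factorial)
      ≤ 2 ^ k * R ^ k / (n.factorial * 1) := by
        gcongr
        linarith
    _ = (2 * R) ^ k / n.factorial := by rw [mul_pow, mul_one]

lemma hasDerivAt_besselI_tsum (m : ℕ) (x : ℝ) :
    HasDerivAt (besselI m) (∑' n, besselTermDeriv m n x) x := by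
  have hR : 1 ≤ |x| + 1 := by linarith [abs_nonneg x]
  have hu : Summable fun n => (2 * (|x| + 1)) ^ (2 * n + m) / n.factorial := by
    refine ((Real.summable_pow_div_factorial ((2 * (|x| + 1)) ^ 2)).mul_left
      ((2 * (|x| + 1)) ^ m)).congr fun n => ?_
    rw [pow_add, pow_mul]
    ring
  exact hasDerivAt_tsum_of_abs_le (hasDerivAt_besselTerm m) hu
    (fun n y hy => abs_besselTermDeriv_le hR hy.le) (lt_add_one _) (summable_besselTerm m x)

lemma besselTermDeriv_zero_succ (n : ℕ) (x : ℝ) :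
    besselTermDeriv 0 (n + 1) x = besselTerm 1 n x := by
  rw [besselTermDeriv, besselTerm, show 2 * (n + 1) + 0 - 1 = 2 * n + 1 by omega,
    Nat.factorial_succ]
  push_cast
  field_simp
  ring

lemma besselTermDeriv_succ_zero (m : ℕ) (x : ℝ) :
    besselTermDeriv (m + 1) 0 x = besselTerm m 0 x / 2 := by
  simp only [besselTermDeriv, besselTerm, mul_zero, zero_add, Nat.add_sub_cancel,
    Nat.factorial_succ, Nat.factorial_zero]
  push_cast
  field_simp
  ring

lemma besselTermDeriv_succ_succ (m n : ℕ) (x : ℝ) :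
    besselTermDeriv (m + 1) (n + 1) x = (besselTerm m (n + 1) x + besselTerm (m + 2) n x) / 2 := by
  rw [besselTermDeriv, besselTerm, besselTerm,
    show 2 * (n + 1) + (m + 1) - 1 = 2 * (n + 1) + m by omega,
    show 2 * n + (m + 2) = 2 * (n + 1) + m by omega, show n + (m + 2) = n + 1 + m + 1 by omega,
    show n + 1 + (m + 1) = n + 1 + m + 1 by omega, Nat.factorial_succ (n + 1 + m),
    Nat.factorial_succ n]
  push_cast
  field_simp
  ring

lemma hasDerivAt_besselI_zero (x : ℝ) : HasDerivAt (besselI 0) (besselI 1 x) x := by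
  convert hasDerivAt_besselI_tsum 0 x using 1
  rw [tsum_eq_zero_add' (by simpa only [besselTermDeriv_zero_succ] using summable_besselTerm 1 x)]
  simp only [besselTermDeriv_zero_succ, besselI_eq_tsum]
  simp [besselTermDeriv]

lemma hasDerivAt_besselI_succ (m : ℕ) (x : ℝ) :
    HasDerivAt (besselI (m + 1)) ((besselI m x + besselI (m + 2) x) / 2) x := by
  have hm := (summable_nat_add_iff 1).mpr (summable_besselTerm m x)
  have hm2 := summable_besselTerm (m + 2) x
  convert hasDerivAt_besselI_tsum (m + 1) x using 1
  rw [tsum_eq_zero_add'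
      (by simpa only [besselTermDeriv_succ_succ] using (hm.add hm2).div_const 2),
    besselI_eq_tsum, besselI_eq_tsum, (summable_besselTerm m x).tsum_eq_zero_add]
  simp only [besselTermDeriv_succ_zero, besselTermDeriv_succ_succ]
  rw [tsum_div_const, hm.tsum_add hm2]
  ring

noncomputable def scaledBesselI (q : ℝ) (m : ℕ) (t : ℝ) : ℝ :=
  q ^ (-(m : ℝ) / 2) * besselI m (2 * √q * t)

lemma rpow_neg_natCast_div_two {q : ℝ} (hq : 0 ≤ q) (m : ℕ) :
    q ^ (-(m : ℝ) / 2) = (√q)⁻¹ ^ m := by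
  rw [sqrt_eq_rpow, ← rpow_neg hq, ← rpow_natCast, ← rpow_mul hq]
  ring_nf

lemma abs_scaledBesselI_le {q : ℝ} (hq : 0 < q) (m : ℕ) {t R : ℝ} (ht : |t| ≤ R) :
    |scaledBesselI q m t| ≤ R ^ m / m.factorial * exp (q * R ^ 2) := by
  have hs : 0 < √q := sqrt_pos.mpr hq
  have harg : |2 * √q * t| / 2 = √q * |t| := by
    rw [abs_mul, abs_mul, abs_two, abs_of_pos hs]; ring
  rw [scaledBesselI, abs_mul, rpow_neg_natCast_div_two hq.le, abs_pow, abs_inv, abs_of_pos hs]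
  calc (√q)⁻¹ ^ m * |besselI m (2 * √q * t)|
      ≤ (√q)⁻¹ ^ m * ((√q * |t|) ^ m / m.factorial * exp ((√q * |t|) ^ 2)) := by
        rw [← harg]; gcongr; exact abs_besselI_le m _
    _ = |t| ^ m / m.factorial * exp (q * |t| ^ 2) := by
        rw [mul_pow, mul_pow, sq_sqrt hq.le, ← mul_assoc, ← mul_div_assoc, ← mul_assoc,
          ← mul_pow, inv_mul_cancel₀ hs.ne', one_pow, one_mul]
    _ ≤ R ^ m / m.factorial * exp (q * R ^ 2) := by
        have hR : 0 ≤ R := (abs_nonneg t).trans ht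
        gcongr

lemma hasDerivAt_scaledBesselI_zero {q : ℝ} (hq : 0 < q) (t : ℝ) :
    HasDerivAt (scaledBesselI q 0) (2 * q * scaledBesselI q 1 t) t := by
  obtain ⟨s, hs, rfl⟩ : ∃ s, 0 < s ∧ q = s ^ 2 := ⟨√q, sqrt_pos.2 hq, (sq_sqrt hq.le).symm⟩
  have h := ((hasDerivAt_besselI_zero _).comp t
    ((hasDerivAt_id' t).const_mul (2 * √(s ^ 2)))).const_mul ((s ^ 2) ^ (-((0 : ℕ) : ℝ) / 2))
  refine h.congr_deriv ?_
  simp only [scaledBesselI, rpow_neg_natCast_div_two (sq_nonneg s), sqrt_sq hs.le, inv_pow]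
  field_simp

lemma hasDerivAt_scaledBesselI_succ {q : ℝ} (hq : 0 < q) (m : ℕ) (t : ℝ) :
    HasDerivAt (scaledBesselI q (m + 1))
      (scaledBesselI q m t + q * scaledBesselI q (m + 2) t) t := by
  obtain ⟨s, hs, rfl⟩ : ∃ s, 0 < s ∧ q = s ^ 2 := ⟨√q, sqrt_pos.2 hq, (sq_sqrt hq.le).symm⟩
  have h := ((hasDerivAt_besselI_succ m _).comp t
    ((hasDerivAt_id' t).const_mul (2 * √(s ^ 2)))).const_mul ((s ^ 2) ^ (-((m + 1 : ℕ) : ℝ) / 2))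
  refine h.congr_deriv ?_
  simp only [scaledBesselI, rpow_neg_natCast_div_two (sq_nonneg s), sqrt_sq hs.le, inv_pow]
  field_simp
  ring

lemma summable_scaledBesselI_comp {q : ℝ} (hq : 0 < q) {k : ℕ → ℕ} (hk : Injective k)
    (t : ℝ) :
    Summable fun j => scaledBesselI q (k j) t := by
  refine .of_norm_bounded ((summable_pow_div_factorial_comp hk |t|).mul_right (exp (q * |t| ^ 2)))
    fun j => ?_
  exact abs_scaledBesselI_le hq (k j) le_rfl

lemma hasDerivAt_tsum_scaledBesselI {q : ℝ} (hq : 0 < q) {k : ℕ → ℕ} (hk : Injective k)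
    (t : ℝ) :
    HasDerivAt (fun s => ∑' j, scaledBesselI q (k j + 1) s)
      (∑' j, (scaledBesselI q (k j) t + q * scaledBesselI q (k j + 2) t)) t := by
  set R := |t| + 1
  have hk2 : Injective fun j => k j + 2 := (add_left_injective 2).comp hk
  have hu := ((summable_pow_div_factorial_comp hk R).add
    ((summable_pow_div_factorial_comp hk2 R).mul_left q)).mul_right (exp (q * R ^ 2))
  refine hasDerivAt_tsum_of_abs_le (fun j => hasDerivAt_scaledBesselI_succ hq (k j)) hu
    (fun j y hy => ?_) (lt_add_one _)
    (summable_scaledBesselI_comp hq ((add_left_injective 1).comp hk) t)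
  calc |scaledBesselI q (k j) y + q * scaledBesselI q (k j + 2) y|
      ≤ |scaledBesselI q (k j) y| + q * |scaledBesselI q (k j + 2) y| :=
        (abs_add_le _ _).trans_eq (by rw [abs_mul, abs_of_pos hq])
    _ ≤ (R ^ k j / (k j).factorial + q * (R ^ (k j + 2) / (k j + 2).factorial)) *
          exp (q * R ^ 2) := by
        rw [add_mul, mul_assoc]
        gcongr <;> exact abs_scaledBesselI_le hq _ hy.le

lemma treeG_eq (q r : ℕ) (t : ℝ) :
    treeG q r t = scaledBesselI q r t - (q - 1) * ∑' j, scaledBesselI q (r + 2 * (j + 1)) t := by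
  simp only [treeG, scaledBesselI]
  push_cast
  rfl

lemma hasDerivAt_treeG_succ {q : ℕ} (hq : 0 < q) (k : ℕ) (t : ℝ) :
    HasDerivAt (treeG q (k + 1)) (q * treeG q (k + 2) t + treeG q k t) t := by
  have hq' : (0 : ℝ) < q := by exact_mod_cast hq
  have hk : Injective fun j => k + 2 * (j + 1) := fun a b h => by simp only at h; omega
  have hk2 : Injective fun j => k + 2 + 2 * (j + 1) := fun a b h => by simp only at h; omega
  have hT : HasDerivAt (fun s => ∑' j, scaledBesselI q (k + 1 + 2 * (j + 1)) s)
      (∑' j, (scaledBesselI q (k + 2 * (j + 1)) t +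
        q * scaledBesselI q (k + 2 + 2 * (j + 1)) t)) t := by
    convert hasDerivAt_tsum_scaledBesselI hq' hk t using 5 <;> ring_nf
  rw [funext (treeG_eq q (k + 1))]
  refine ((hasDerivAt_scaledBesselI_succ hq' k t).sub (hT.const_mul _)).congr_deriv ?_
  rw [treeG_eq, treeG_eq, (summable_scaledBesselI_comp hq' hk t).tsum_add
    ((summable_scaledBesselI_comp hq' hk2 t).mul_left _), tsum_mul_left]
  ring

lemma hasDerivAt_treeG_zero {q : ℕ} (hq : 0 < q) (t : ℝ) :
    HasDerivAt (treeG q 0) ((q + 1) * treeG q 1 t) t := by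
  have hq' : (0 : ℝ) < q := by exact_mod_cast hq
  have hodd : Injective fun j => 2 * j + 1 := fun a b h => by simp only at h; omega
  have hodd' : Injective fun j => 1 + 2 * (j + 1) := fun a b h => by simp only at h; omega
  have hT : HasDerivAt (fun s => ∑' j, scaledBesselI q (0 + 2 * (j + 1)) s)
      (∑' j, (scaledBesselI q (2 * j + 1) t + q * scaledBesselI q (1 + 2 * (j + 1)) t)) t := by
    convert hasDerivAt_tsum_scaledBesselI hq' hodd t using 5 <;> ring_nf
  have hsplit : ∑' j, scaledBesselI q (2 * j + 1) t =
      scaledBesselI q 1 t + ∑' j, scaledBesselI q (1 + 2 * (j + 1)) t := by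
    rw [(summable_scaledBesselI_comp hq' hodd t).tsum_eq_zero_add]
    congr 1
    exact tsum_congr fun j => by ring_nf
  rw [funext (treeG_eq q 0)]
  refine ((hasDerivAt_scaledBesselI_zero hq' t).sub (hT.const_mul _)).congr_deriv ?_
  rw [treeG_eq, (summable_scaledBesselI_comp hq' hodd t).tsum_add
    ((summable_scaledBesselI_comp hq' hodd' t).mul_left _), tsum_mul_left, hsplit]
  ring

theorem treeG_heat_equations_general (q : ℕ) (hq : 2 ≤ q) (t : ℝ) :
    ((q : ℝ) + 1) * treeG q 1 t = deriv (fun s => treeG q 0 s) t ∧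
    ∀ r : ℕ, 1 ≤ r →
      (q : ℝ) * treeG q (r + 1) t + treeG q (r - 1) t = deriv (fun s => treeG q r s) t := by
  have hq0 : 0 < q := by omega
  refine ⟨(hasDerivAt_treeG_zero hq0 t).deriv.symm, fun r hr => ?_⟩
  obtain ⟨k, rfl⟩ : ∃ k, r = k + 1 := ⟨r - 1, by omega⟩
  exact (hasDerivAt_treeG_succ hq0 k t).deriv.symm

theorem treeG_heat_equations (q : ℕ) (hq : 2 ≤ q) (t : ℝ) (ht : 0 < t) :
    ((q : ℝ) + 1) * treeG q 1 t = deriv (fun s => treeG q 0 s) t ∧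
    ∀ r : ℕ, 1 ≤ r →
      (q : ℝ) * treeG q (r + 1) t + treeG q (r - 1) t = deriv (fun s => treeG q r s) t :=
  treeG_heat_equations_general q hq t
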